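/- Let E be a real normed vector space and E' a real Banach space, ε > 0 and p < 0. Suppose f : E → E' satisfies ‖f(x+y) − f(x) − f(y)‖ ≤ ε(‖x‖^p + ‖y‖^p) for all nonzero x, y ∈ E. Then there exists a unique additive mapping T : E → E' such that ‖f(x) − T(x)‖ ≤ (2ε/(2 − 2^p))‖x‖^p for all nonzero x ∈ E. -/

import Mathlib

/-!
Hyers' direct method. The maps `x ↦ 2⁻ⁿ f(2ⁿ x)` have Cauchy differences bounded by
`ε (‖x‖ᵖ + ‖y‖ᵖ) ρⁿ` with `ρ = 2ᵖ / 2 < 1`, and consecutive terms differ by at most `ε ‖x‖ᵖ ρⁿ`.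
Hence they converge, geometrically, to an additive map `T` with
`‖f x - T x‖ ≤ ε ‖x‖ᵖ / (1 - ρ)`. If `T'` is another such map, `T' - T` is additive, so
`‖T' x - T x‖ = 2⁻ⁿ ‖T' (2ⁿ x) - T (2ⁿ x)‖ ≤ C ‖x‖ᵖ ρⁿ → 0`.
-/

open Filter Topology

section Module

variable {E E' : Type*} [AddCommGroup E] [Module ℝ E] [AddCommGroup E'] [Module ℝ E']

noncomputable def hyersSeq (f : E → E') (n : ℕ) (x : E) : E' :=
  ((2 : ℝ) ^ n)⁻¹ • f ((2 : ℝ) ^ n • x)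

@[simp]
lemma hyersSeq_zero (f : E → E') (x : E) : hyersSeq f 0 x = f x := by
  simp [hyersSeq]

lemma hyersSeq_add_sub_sub (f : E → E') (n : ℕ) (x y : E) :
    hyersSeq f n (x + y) - hyersSeq f n x - hyersSeq f n y =
      ((2 : ℝ) ^ n)⁻¹ •
        (f ((2 : ℝ) ^ n • x + (2 : ℝ) ^ n • y) - f ((2 : ℝ) ^ n • x) - f ((2 : ℝ) ^ n • y)) := by
  simp only [hyersSeq, smul_add, smul_sub]

lemma hyersSeq_add_self (f : E → E') (n : ℕ) (x : E) :
    hyersSeq f n (x + x) = (2 : ℝ) • hyersSeq f (n + 1) x := by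
  simp only [hyersSeq, ← two_smul ℝ x, smul_smul, pow_succ]
  congr 1
  field_simp

lemma AddMonoidHom.map_two_pow_smul (D : E →+ E') (n : ℕ) (x : E) :
    D ((2 : ℝ) ^ n • x) = (2 : ℝ) ^ n • D x := by
  simpa using map_natCast_smul D ℝ ℝ (2 ^ n) x

end Module

lemma two_rpow_div_two_lt_one {p : ℝ} (hp : p < 1) : (2 : ℝ) ^ p / 2 < 1 := by
  rw [div_lt_one two_pos]
  simpa using Real.rpow_lt_rpow_of_exponent_lt one_lt_two hp

lemma tendsto_two_rpow_div_two_pow {p : ℝ} (hp : p < 1) :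
    Tendsto (fun n : ℕ => ((2 : ℝ) ^ p / 2) ^ n) atTop (𝓝 0) :=
  tendsto_pow_atTop_nhds_zero_of_lt_one (by positivity) (two_rpow_div_two_lt_one hp)

section Normed

variable {E E' : Type*} [NormedAddCommGroup E] [NormedSpace ℝ E]
  [NormedAddCommGroup E'] [NormedSpace ℝ E'] {ε p : ℝ} {f : E → E'}

lemma inv_two_pow_mul_norm_two_pow_smul_rpow (p : ℝ) (n : ℕ) (x : E) :
    ((2 : ℝ) ^ n)⁻¹ * ‖(2 : ℝ) ^ n • x‖ ^ p = ((2 : ℝ) ^ p / 2) ^ n * ‖x‖ ^ p := by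
  have hpow : ((2 : ℝ) ^ n) ^ p = ((2 : ℝ) ^ p) ^ n := by
    rw [← Real.rpow_natCast, ← Real.rpow_natCast, ← Real.rpow_mul zero_le_two,
      ← Real.rpow_mul zero_le_two, mul_comm]
  rw [norm_smul, Real.norm_of_nonneg (by positivity),
    Real.mul_rpow (by positivity) (norm_nonneg x), hpow, div_pow]
  field_simp

lemma tendsto_hyersSeq_apply_zero (f : E → E') :
    Tendsto (fun n => hyersSeq f n 0) atTop (𝓝 0) := by
  simp only [hyersSeq, smul_zero, ← inv_pow]
  simpa using (tendsto_pow_atTop_nhds_zero_of_lt_one (r := (2 : ℝ)⁻¹) (by norm_num)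
    (by norm_num)).smul_const (f 0)

variable (f) in
noncomputable def hyersLimit (x : E) : E' :=
  limUnder atTop fun n => hyersSeq f n x

lemma hyersLimit_zero (f : E → E') : hyersLimit f 0 = 0 :=
  (tendsto_hyersSeq_apply_zero f).limUnder_eq

variable (hf : ∀ x y : E, x ≠ 0 → y ≠ 0 → ‖f (x + y) - f x - f y‖ ≤ ε * (‖x‖ ^ p + ‖y‖ ^ p))
include hf

lemma norm_hyersSeq_add_sub_sub_le {x y : E} (hx : x ≠ 0) (hy : y ≠ 0) (n : ℕ) :
    ‖hyersSeq f n (x + y) - hyersSeq f n x - hyersSeq f n y‖ ≤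
      ε * (‖x‖ ^ p + ‖y‖ ^ p) * ((2 : ℝ) ^ p / 2) ^ n := by
  have h2n : (2 : ℝ) ^ n ≠ 0 := by positivity
  rw [hyersSeq_add_sub_sub, norm_smul, Real.norm_of_nonneg (by positivity)]
  calc ((2 : ℝ) ^ n)⁻¹ *
        ‖f ((2 : ℝ) ^ n • x + (2 : ℝ) ^ n • y) - f ((2 : ℝ) ^ n • x) - f ((2 : ℝ) ^ n • y)‖
      ≤ ((2 : ℝ) ^ n)⁻¹ * (ε * (‖(2 : ℝ) ^ n • x‖ ^ p + ‖(2 : ℝ) ^ n • y‖ ^ p)) :=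
        mul_le_mul_of_nonneg_left
          (hf _ _ (smul_ne_zero h2n hx) (smul_ne_zero h2n hy)) (by positivity)
    _ = ε * (‖x‖ ^ p + ‖y‖ ^ p) * ((2 : ℝ) ^ p / 2) ^ n := by
        rw [mul_left_comm, mul_add, inv_two_pow_mul_norm_two_pow_smul_rpow,
          inv_two_pow_mul_norm_two_pow_smul_rpow]
        ring

lemma norm_hyersSeq_sub_succ_le {x : E} (hx : x ≠ 0) (n : ℕ) :
    ‖hyersSeq f n x - hyersSeq f (n + 1) x‖ ≤ ε * ‖x‖ ^ p * ((2 : ℝ) ^ p / 2) ^ n := by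
  have hcauchy := norm_hyersSeq_add_sub_sub_le hf hx hx n
  have hdiff : hyersSeq f n x - hyersSeq f (n + 1) x =
      -(2 : ℝ)⁻¹ • (hyersSeq f n (x + x) - hyersSeq f n x - hyersSeq f n x) := by
    rw [hyersSeq_add_self, smul_sub, smul_sub, smul_smul]
    module
  rw [hdiff, norm_smul, norm_neg, norm_inv, Real.norm_two]
  linarith

variable [CompleteSpace E']

lemma exists_tendsto_hyersSeq (hp : p < 1) (x : E) :
    ∃ L, Tendsto (fun n => hyersSeq f n x) atTop (𝓝 L) := by
  rcases eq_or_ne x 0 with rfl | hx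
  · exact ⟨0, tendsto_hyersSeq_apply_zero f⟩
  · refine cauchySeq_tendsto_of_complete <|
      cauchySeq_of_le_geometric _ (ε * ‖x‖ ^ p) (two_rpow_div_two_lt_one hp) fun n => ?_
    rw [dist_eq_norm]
    exact norm_hyersSeq_sub_succ_le hf hx n

lemma tendsto_hyersLimit (hp : p < 1) (x : E) :
    Tendsto (fun n => hyersSeq f n x) atTop (𝓝 (hyersLimit f x)) :=
  tendsto_nhds_limUnder (exists_tendsto_hyersSeq hf hp x)

lemma hyersLimit_add (hp : p < 1) (x y : E) :
    hyersLimit f (x + y) = hyersLimit f x + hyersLimit f y := by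
  rcases eq_or_ne x 0 with rfl | hx
  · simp [hyersLimit_zero]
  rcases eq_or_ne y 0 with rfl | hy
  · simp [hyersLimit_zero]
  suffices hyersLimit f (x + y) - hyersLimit f x - hyersLimit f y = 0 by
    rwa [sub_sub, sub_eq_zero] at this
  have hlim := ((tendsto_hyersLimit hf hp (x + y)).sub (tendsto_hyersLimit hf hp x)).sub
    (tendsto_hyersLimit hf hp y)
  refine tendsto_nhds_unique hlim (squeeze_zero_norm (norm_hyersSeq_add_sub_sub_le hf hx hy) ?_)
  simpa using (tendsto_two_rpow_div_two_pow hp).const_mul (ε * (‖x‖ ^ p + ‖y‖ ^ p))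

lemma norm_sub_hyersLimit_le (hp : p < 1) {x : E} (hx : x ≠ 0) :
    ‖f x - hyersLimit f x‖ ≤ 2 * ε / (2 - 2 ^ p) * ‖x‖ ^ p := by
  have hgeom := dist_le_of_le_geometric_of_tendsto₀ _ (ε * ‖x‖ ^ p) (two_rpow_div_two_lt_one hp)
    (fun n => (dist_eq_norm _ _).trans_le (norm_hyersSeq_sub_succ_le hf hx n))
    (tendsto_hyersLimit hf hp x)
  have h2p : (2 : ℝ) ^ p < 2 := by linarith [two_rpow_div_two_lt_one hp]
  rw [hyersSeq_zero, dist_eq_norm] at hgeom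
  convert hgeom using 1
  field_simp [sub_ne_zero.mpr h2p.ne']

end Normed

lemma AddMonoidHom.eq_zero_of_norm_le_mul_rpow {E E' : Type*} [NormedAddCommGroup E]
    [NormedSpace ℝ E] [NormedAddCommGroup E'] [NormedSpace ℝ E'] {C p : ℝ} (hp : p < 1)
    (D : E →+ E') (hD : ∀ x, x ≠ 0 → ‖D x‖ ≤ C * ‖x‖ ^ p) : D = 0 := by
  ext x
  rcases eq_or_ne x 0 with rfl | hx
  · simp
  have hbound (n : ℕ) : ‖D x‖ ≤ C * ‖x‖ ^ p * ((2 : ℝ) ^ p / 2) ^ n := by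
    have h2n : (2 : ℝ) ^ n ≠ 0 := by positivity
    have hscaled := mul_le_mul_of_nonneg_left (hD _ (smul_ne_zero h2n hx))
      (inv_nonneg.mpr (pow_nonneg zero_le_two n))
    rw [D.map_two_pow_smul, norm_smul, Real.norm_of_nonneg (by positivity),
      inv_mul_cancel_left₀ h2n, mul_left_comm, inv_two_pow_mul_norm_two_pow_smul_rpow,
      mul_left_comm, ← mul_assoc] at hscaled
    linarith
  have hlim := (tendsto_two_rpow_div_two_pow hp).const_mul (C * ‖x‖ ^ p)
  rw [mul_zero] at hlim
  exact norm_le_zero_iff.mp (ge_of_tendsto' hlim hbound)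

theorem rassias_stability_neg_exponent_general
    {E E' : Type*} [NormedAddCommGroup E] [NormedSpace ℝ E]
    [NormedAddCommGroup E'] [NormedSpace ℝ E'] [CompleteSpace E']
    (ε p : ℝ) (hp : p < 0)
    (f : E → E')
    (hf : ∀ x y : E, x ≠ 0 → y ≠ 0 → ‖f (x + y) - f x - f y‖ ≤ ε * (‖x‖ ^ p + ‖y‖ ^ p)) :
    ∃! T : E → E',
      (∀ x y : E, T (x + y) = T x + T y) ∧
      (∀ x : E, x ≠ 0 → ‖f x - T x‖ ≤ 2 * ε / (2 - 2 ^ p) * ‖x‖ ^ p) := by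
  have hp1 : p < 1 := hp.trans one_pos
  refine ⟨hyersLimit f, ⟨hyersLimit_add hf hp1, fun x hx => norm_sub_hyersLimit_le hf hp1 hx⟩, ?_⟩
  rintro T ⟨hT_add, hT_near⟩
  set K := 2 * ε / (2 - 2 ^ p)
  let D : E →+ E' :=
    AddMonoidHom.mk' T hT_add - AddMonoidHom.mk' (hyersLimit f) (hyersLimit_add hf hp1)
  have hD : D = 0 := D.eq_zero_of_norm_le_mul_rpow hp1 fun x hx => by
    calc ‖T x - hyersLimit f x‖ = ‖(f x - hyersLimit f x) - (f x - T x)‖ := by congr 1; abel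
      _ ≤ ‖f x - hyersLimit f x‖ + ‖f x - T x‖ := norm_sub_le _ _
      _ ≤ K * ‖x‖ ^ p + K * ‖x‖ ^ p :=
          add_le_add (norm_sub_hyersLimit_le hf hp1 hx) (hT_near x hx)
      _ = 2 * K * ‖x‖ ^ p := by ring
  funext x
  simpa [D, sub_eq_zero] using DFunLike.congr_fun hD x

/-- Rassias' stability theorem for negative exponent `p < 0`: if
`‖f(x+y) − f(x) − f(y)‖ ≤ ε(‖x‖^p + ‖y‖^p)` holds for all nonzero `x, y`, then there
exists a unique additive `T` with `‖f(x) − T(x)‖ ≤ 2ε/(2 − 2^p)·‖x‖^p` for all `x ≠ 0`. -/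
theorem rassias_stability_neg_exponent
    {E E' : Type*} [NormedAddCommGroup E] [NormedSpace ℝ E]
    [NormedAddCommGroup E'] [NormedSpace ℝ E'] [CompleteSpace E']
    (ε p : ℝ) (hε : 0 < ε) (hp : p < 0)
    (f : E → E')
    (hf : ∀ x y : E, x ≠ 0 → y ≠ 0 → ‖f (x + y) - f x - f y‖ ≤ ε * (‖x‖ ^ p + ‖y‖ ^ p)) :
    ∃! T : E → E',
      (∀ x y : E, T (x + y) = T x + T y) ∧
      (∀ x : E, x ≠ 0 → ‖f x - T x‖ ≤ 2 * ε / (2 - 2 ^ p) * ‖x‖ ^ p) :=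
  rassias_stability_neg_exponent_general ε p hp f hf
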